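/- arXiv:math/0511735 — 2 statements merged into one kernel-verified Lean document; each statement's English description precedes it below -/
import Mathlib

section
/- Suppose Ω satisfies Condition (*), and for distinct p,q,r ∈ {1,…,k+2} set Or_{pqr} = ε^p_q·ε^q_r·ε^r_p. Then for all distinct p,q,r,s ∈ {1,…,k+2}: Or_{pqr} + Or_{prs} + Or_{psq} = Or_{qrs}. -/
open Finset

/-- Determinant of the submatrix of `Ω` obtained by deleting the rows in `s`. -/
noncomputable def minorDet (k : ℕ) (Ω : Matrix (Fin (k + 2)) (Fin k) ℤ)
    (s : Finset (Fin (k + 2))) : ℤ :=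
  if h : sᶜ.card = k then (Ω.submatrix (sᶜ.orderEmbOfFin h) id).det else 0

/-- `Δ_{pq}`: determinant of `Ω` with rows `p` and `q` deleted. -/
noncomputable def Delta (k : ℕ) (Ω : Matrix (Fin (k + 2)) (Fin k) ℤ) (p q : Fin (k + 2)) : ℤ :=
  minorDet k Ω {p, q}

theorem Delta_symm (k : ℕ) (Ω : Matrix (Fin (k + 2)) (Fin k) ℤ) (p q : Fin (k + 2)) :
    Delta k Ω p q = Delta k Ω q p := by
  unfold Delta; rw [Finset.pair_comm]

/-- Condition (*). -/
def CondStar (k : ℕ) (Ω : Matrix (Fin (k + 2)) (Fin k) ℤ) : Prop :=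
  (∀ p q : Fin (k + 2), p ≠ q → Delta k Ω p q ≠ 0) ∧
  (∀ p : Fin (k + 2), (Finset.univ.erase p).gcd (fun q => (Delta k Ω p q).natAbs) = 1)

/-- The sign `ε^p_q`. -/
noncomputable def eps (k : ℕ) (Ω : Matrix (Fin (k + 2)) (Fin k) ℤ) (p q : Fin (k + 2)) : ℤ :=
  (-1) ^ ((p : ℕ) + (q : ℕ)) * Int.sign ((p : ℤ) - (q : ℤ)) * Int.sign (Delta k Ω p q)

/-- `v_p = Σ_i Ω_{pi} x_i`. -/
noncomputable def vP (k : ℕ) (Ω : Matrix (Fin (k + 2)) (Fin k) ℤ) (p : Fin (k + 2)) :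
    MvPolynomial (Fin k) ℤ :=
  ∑ i : Fin k, MvPolynomial.C (Ω p i) * MvPolynomial.X i

/-!
The signed minors `W p q = (-1)^(p+q) sign(p-q) Δ_{pq}` form an antisymmetric matrix. Row `q`
of `W` is, up to sign, the vector of maximal minors of `Ω` with row `q` removed, so by Laplace
expansion it lies in the left kernel of `Ω`. Since `Δ_{pq} ≠ 0`, the rows of `Ω` outside `{p, q}` are independent, so a
left-kernel vector vanishing at `p` and `q` is zero. Applied to
`W p q • W r + W q r • W p + W r p • W q` this gives the Plücker relation
`W p q W r s + W q r W p s + W r p W q s = 0`. Its three nonzero terms cannot all have the same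
sign, and in terms of `ε = sign W` this is exactly the orientation identity.
-/

open Matrix

theorem Int.sign_neg_one_pow (n : ℕ) : ((-1 : ℤ) ^ n).sign = (-1) ^ n := by
  rcases neg_one_pow_eq_or ℤ n with h | h <;> rw [h] <;> rfl

theorem Matrix.sum_neg_one_pow_mul_det_submatrix_succAbove {R : Type*} [CommRing R] {n : ℕ}
    (A : Matrix (Fin (n + 1)) (Fin n) R) (i : Fin n) :
    ∑ j : Fin (n + 1), (-1) ^ (j : ℕ) * A j i * (A.submatrix j.succAbove id).det = 0 := by
  -- the determinant of `[A·i | A]` vanishes; expand it along its first column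
  set B : Matrix (Fin (n + 1)) (Fin (n + 1)) R := of fun j => Fin.cons (A j i) (A j)
  have hB : B.det = 0 := det_zero_of_column_eq (Fin.succ_ne_zero i).symm fun _ => rfl
  exact (det_succ_column_zero B).symm.trans hB

section
variable {k : ℕ} (Ω : Matrix (Fin (k + 2)) (Fin k) ℤ)

theorem minorDet_compl_card_eq {s : Finset (Fin (k + 2))} (h : minorDet k Ω s ≠ 0) :
    sᶜ.card = k := by
  by_contra hs
  exact h (dif_neg hs)

theorem eq_zero_of_vecMul_eq_zero_of_minorDet_ne_zero {s : Finset (Fin (k + 2))}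
    (hΔ : minorDet k Ω s ≠ 0) {y : Fin (k + 2) → ℤ} (hy : y ᵥ* Ω = 0)
    (hys : ∀ t ∈ s, y t = 0) : y = 0 := by
  have hcard := minorDet_compl_card_eq Ω hΔ
  set E := sᶜ.orderEmbOfFin hcard
  have hE : y ∘ E = 0 := by
    refine eq_zero_of_vecMul_eq_zero (M := Ω.submatrix E id) ?_ ?_
    · rwa [minorDet, dif_pos hcard] at hΔ
    · funext i
      have hsupp : ∑ t ∈ sᶜ, y t * Ω t i = ∑ t, y t * Ω t i :=
        Finset.sum_subset (Finset.subset_univ _) fun t _ ht => by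
          rw [hys t (by simpa using ht), zero_mul]
      simp only [vecMul, dotProduct, submatrix_apply, Function.comp_apply, id_eq,
        Pi.zero_apply]
      have hsum : ∑ j, y (E j) * Ω (E j) i = ∑ t ∈ sᶜ, y t * Ω t i := by
        rw [← Finset.map_orderEmbOfFin_univ sᶜ hcard, Finset.sum_map]
        rfl
      rw [hsum, hsupp]
      exact congrFun hy i
  funext t
  by_cases ht : t ∈ s
  · exact hys t ht
  · obtain ⟨j, rfl⟩ : t ∈ Set.range E := by
      rw [Finset.range_orderEmbOfFin]
      simpa using ht
    exact congrFun hE j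

theorem Delta_succAbove (q : Fin (k + 2)) (j : Fin (k + 1)) :
    Delta k Ω q (q.succAbove j) =
      ((Ω.submatrix q.succAbove id).submatrix j.succAbove id).det := by
  have hcard : ({q, q.succAbove j}ᶜ : Finset (Fin (k + 2))).card = k := by
    rw [Finset.card_compl, Finset.card_pair (Fin.succAbove_ne q j).symm]
    simp
  have hE : q.succAbove ∘ j.succAbove = ({q, q.succAbove j}ᶜ : Finset _).orderEmbOfFin hcard :=
    Finset.orderEmbOfFin_unique hcard
      (fun x => by
        simp [Fin.succAbove_ne, Fin.succAbove_right_injective.ne (Fin.succAbove_ne j x)])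
      ((Fin.strictMono_succAbove q).comp (Fin.strictMono_succAbove j))
  rw [Delta, minorDet, dif_pos hcard, ← hE]
  rfl

-- Up to a global sign this is `det [Ωᵀ; e_p; e_q]`, an alternating form in `e_p, e_q` that
-- vanishes on the columns of `Ω`.
noncomputable def signedMinor (p q : Fin (k + 2)) : ℤ :=
  (-1) ^ ((p : ℕ) + (q : ℕ)) * Int.sign ((p : ℤ) - (q : ℤ)) * Delta k Ω p q

theorem signedMinor_antisymm (p q : Fin (k + 2)) :
    signedMinor Ω q p = -signedMinor Ω p q := by
  rw [signedMinor, signedMinor, Delta_symm, add_comm, ← neg_sub, Int.sign_neg]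
  ring

theorem signedMinor_self (p : Fin (k + 2)) : signedMinor Ω p p = 0 := by
  simp [signedMinor]

theorem signedMinor_ne_zero {p q : Fin (k + 2)} (hpq : p ≠ q) (hΔ : Delta k Ω p q ≠ 0) :
    signedMinor Ω p q ≠ 0 := by
  have : ((p : ℤ) - q).sign ≠ 0 := by
    rw [Ne, Int.sign_eq_zero_iff_zero, sub_eq_zero]
    exact_mod_cast Fin.val_ne_of_ne hpq
  exact mul_ne_zero (mul_ne_zero (pow_ne_zero _ (by norm_num)) this) hΔ

theorem signedMinor_succAbove (q : Fin (k + 2)) (j : Fin (k + 1)) :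
    signedMinor Ω q (q.succAbove j) =
      (-1) ^ (q : ℕ) * (-1) ^ (j : ℕ) * Delta k Ω q (q.succAbove j) := by
  rw [signedMinor]
  congr 1
  rcases lt_or_ge j.castSucc q with h | h
  · rw [Fin.succAbove_of_castSucc_lt _ _ h,
      Int.sign_eq_one_of_pos (by simp [Fin.lt_def] at h ⊢; omega)]
    simp [pow_add]
  · rw [Fin.succAbove_of_le_castSucc _ _ h,
      Int.sign_eq_neg_one_of_neg (by simp [Fin.le_def] at h ⊢; omega)]
    simp [pow_add]

theorem signedMinor_vecMul (q : Fin (k + 2)) : signedMinor Ω q ᵥ* Ω = 0 := by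
  funext i
  have := Matrix.sum_neg_one_pow_mul_det_submatrix_succAbove (Ω.submatrix q.succAbove id) i
  simp only [vecMul, dotProduct, Pi.zero_apply]
  rw [Fin.sum_univ_succAbove _ q, signedMinor_self, zero_mul, zero_add,
    ← mul_zero ((-1 : ℤ) ^ (q : ℕ)), ← this, Finset.mul_sum]
  refine Finset.sum_congr rfl fun j _ => ?_
  simp only [signedMinor_succAbove, Delta_succAbove, submatrix_apply, id_eq]
  ring

theorem signedMinor_plucker {p q : Fin (k + 2)} (hΔ : Delta k Ω p q ≠ 0) (r s : Fin (k + 2)) :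
    signedMinor Ω p q * signedMinor Ω r s + signedMinor Ω q r * signedMinor Ω p s +
      signedMinor Ω r p * signedMinor Ω q s = 0 := by
  set y := signedMinor Ω p q • signedMinor Ω r + signedMinor Ω q r • signedMinor Ω p +
    signedMinor Ω r p • signedMinor Ω q
  have hy : y ᵥ* Ω = 0 := by
    simp only [y, add_vecMul, smul_vecMul, signedMinor_vecMul, smul_zero, add_zero]
  have hypq : ∀ t ∈ ({p, q} : Finset (Fin (k + 2))), y t = 0 := by
    simp only [Finset.mem_insert, Finset.mem_singleton]
    rintro t (rfl | rfl) <;>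
      simp only [y, Pi.add_apply, Pi.smul_apply, smul_eq_mul, signedMinor_self]
    · rw [signedMinor_antisymm Ω t q]
      ring
    · rw [signedMinor_antisymm Ω r t]
      ring
  have := congrFun (eq_zero_of_vecMul_eq_zero_of_minorDet_ne_zero Ω hΔ hy hypq) s
  simpa [y, mul_comm] using this

theorem eps_eq_sign_signedMinor (p q : Fin (k + 2)) :
    eps k Ω p q = (signedMinor Ω p q).sign := by
  rw [eps, signedMinor, Int.sign_mul, Int.sign_mul, Int.sign_sign, Int.sign_neg_one_pow]

theorem eps_antisymm (p q : Fin (k + 2)) : eps k Ω q p = -eps k Ω p q := by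
  rw [eps_eq_sign_signedMinor, eps_eq_sign_signedMinor, signedMinor_antisymm, Int.sign_neg]

end

theorem Int.sign_mul_sign_add_eq_neg_one {a b c : ℤ} (ha : a ≠ 0) (hb : b ≠ 0) (hc : c ≠ 0)
    (h : a + b + c = 0) : a.sign * b.sign + b.sign * c.sign + c.sign * a.sign = -1 := by
  rcases ha.lt_or_gt with ha | ha <;> rcases hb.lt_or_gt with hb | hb <;>
    rcases hc.lt_or_gt with hc | hc <;>
    simp only [Int.sign_eq_neg_one_of_neg, Int.sign_eq_one_of_pos, *] <;> omega

theorem Int.sign_eq_one_or_neg_one {a : ℤ} (ha : a ≠ 0) : a.sign = 1 ∨ a.sign = -1 := by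
  rcases ha.lt_or_gt with ha | ha
  · exact Or.inr (Int.sign_eq_neg_one_of_neg ha)
  · exact Or.inl (Int.sign_eq_one_of_pos ha)

theorem orientation_identity_of_plucker_signs {ι : Type*} {e : ι → ι → ℤ}
    (he : ∀ x y, x ≠ y → e x y = 1 ∨ e x y = -1) (hanti : ∀ x y, e y x = -e x y)
    {p q r s : ι} (hpq : p ≠ q) (hpr : p ≠ r) (hps : p ≠ s) (hqr : q ≠ r) (hqs : q ≠ s)
    (hrs : r ≠ s)
    (h : e p q * e r s * (e q r * e p s) + e q r * e p s * (e r p * e q s) +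
      e r p * e q s * (e p q * e r s) = -1) :
    e p q * e q r * e r p + e p r * e r s * e s p + e p s * e s q * e q p =
      e q r * e r s * e s q := by
  simp only [hanti p r, hanti p s, hanti p q, hanti q s] at h ⊢
  revert h
  rcases he p q hpq with h₁ | h₁ <;> rcases he p r hpr with h₂ | h₂ <;>
    rcases he p s hps with h₃ | h₃ <;> rcases he q r hqr with h₄ | h₄ <;>
    rcases he q s hqs with h₅ | h₅ <;> rcases he r s hrs with h₆ | h₆ <;>
    norm_num [h₁, h₂, h₃, h₄, h₅, h₆]

theorem orientation_identity_general (k : ℕ) (Ω : Matrix (Fin (k + 2)) (Fin k) ℤ)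
    (hΩ : CondStar k Ω) (p q r s : Fin (k + 2))
    (hpq : p ≠ q) (hpr : p ≠ r) (hps : p ≠ s) (hqr : q ≠ r) (hqs : q ≠ s) (hrs : r ≠ s) :
    eps k Ω p q * eps k Ω q r * eps k Ω r p +
    eps k Ω p r * eps k Ω r s * eps k Ω s p +
    eps k Ω p s * eps k Ω s q * eps k Ω q p =
    eps k Ω q r * eps k Ω r s * eps k Ω s q := by
  have hW : ∀ x y, x ≠ y → signedMinor Ω x y ≠ 0 := fun x y hxy =>
    signedMinor_ne_zero Ω hxy (hΩ.1 x y hxy)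
  have hsigns := Int.sign_mul_sign_add_eq_neg_one (mul_ne_zero (hW p q hpq) (hW r s hrs))
    (mul_ne_zero (hW q r hqr) (hW p s hps)) (mul_ne_zero (hW r p hpr.symm) (hW q s hqs))
    (signedMinor_plucker Ω (hΩ.1 p q hpq) r s)
  simp only [Int.sign_mul, ← eps_eq_sign_signedMinor] at hsigns
  refine orientation_identity_of_plucker_signs (fun x y hxy => ?_) (eps_antisymm Ω)
    hpq hpr hps hqr hqs hrs hsigns
  rw [eps_eq_sign_signedMinor]
  exact Int.sign_eq_one_or_neg_one (hW x y hxy)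

/-- `Or_{pqr} + Or_{prs} + Or_{psq} = Or_{qrs}` where `Or_{pqr} = ε^p_q ε^q_r ε^r_p`. -/
theorem orientation_identity (k : ℕ) (hk : 2 ≤ k) (Ω : Matrix (Fin (k + 2)) (Fin k) ℤ)
    (hΩ : CondStar k Ω) (p q r s : Fin (k + 2))
    (hpq : p ≠ q) (hpr : p ≠ r) (hps : p ≠ s) (hqr : q ≠ r) (hqs : q ≠ s) (hrs : r ≠ s) :
    eps k Ω p q * eps k Ω q r * eps k Ω r p +
    eps k Ω p r * eps k Ω r s * eps k Ω s p +
    eps k Ω p s * eps k Ω s q * eps k Ω q p =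
    eps k Ω q r * eps k Ω r s * eps k Ω s q :=
  orientation_identity_general k Ω hΩ p q r s hpq hpr hps hqr hqs hrs
end

section
/- Suppose Ω satisfies Condition (*) and fix p ∈ {1,…,k+2}. Then the set N^p_Ω = {x ∈ N_Ω : x_p = 0} is nonempty, and for any x, y ∈ N^p_Ω there exist a (k+2)-tuple t of unit complex quaternions and a unit quaternion s such that y_q = t_q·x_q·s⁻¹ for all q ∈ {1,…,k+2}. -/
open Finset
open scoped Quaternion

/-- The imaginary unit `i` of the quaternions. -/
def qI : ℍ := ⟨0, 1, 0, 0⟩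

/-- A quaternion is a *unit complex* quaternion if its `j`- and `k`-components vanish
and it has norm `1`. -/
def IsUnitComplexQ (z : ℍ) : Prop := z.imJ = 0 ∧ z.imK = 0 ∧ ‖z‖ = 1

/-- The zero set `N_Ω` of the moment map `μ_Ω`, inside the unit sphere of `ℍ^{k+2}`. -/
def NOmega (k : ℕ) (Ω : Matrix (Fin (k + 2)) (Fin k) ℤ) : Set (Fin (k + 2) → ℍ) :=
  {x | (∑ p : Fin (k + 2), ‖x p‖ ^ 2 = 1) ∧
    ∀ j : Fin k, ∑ p : Fin (k + 2), star (x p) * qI * x p * ((Ω p j : ℤ) : ℍ) = 0}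

/-!
Write `hopf z = z̄ i z`. For `x ∈ N_Ω` with `x_p = 0`, the vector `(hopf x_q)_{q ≠ p}` lies in the
left kernel of the `(k+1) × k` integer matrix of the rows of `Ω` other than the `p`-th. One of its
maximal minors is `±Δ_{pq} ≠ 0`, so that kernel is spanned by the vector `c` of alternating
maximal minors, `c_q = ±Δ_{pq}`: `hopf x_q = c_q w` for a single quaternion `w`, and the sphere
condition gives `‖w‖ = 1 / ∑ |c_q|`. Choosing `z_q` with `hopf z_q = (c_q / ∑ |c|) i` produces a
point. For two points `x, y`, the unit `s` with `y_{q₀} = x_{q₀} s` at a coordinate with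
`c_{q₀} ≠ 0` conjugates `w_x` into `w_y`, so `hopf y_q = hopf (x_q s)` for every `q`; and
`hopf y = hopf x'` forces `y = t x'` with `t` a unit commuting with `i`, i.e. a unit complex number.
-/

namespace Matrix

variable {k : ℕ}

section CommRing

variable {R : Type*} [CommRing R]

def altMinors (A : Matrix (Fin (k + 1)) (Fin k) R) : Fin (k + 1) → R :=
  fun i => (-1) ^ (i : ℕ) * (A.submatrix i.succAbove id).det

theorem altMinors_zero (A : Matrix (Fin (k + 1)) (Fin k) R) :
    altMinors A 0 = (A.submatrix Fin.succ id).det := by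
  simp [altMinors]

theorem altMinors_vecMul (A : Matrix (Fin (k + 1)) (Fin k) R) :
    altMinors A ᵥ* A = 0 := by
  funext j
  -- Laplace expansion of `[A·j | A]`, whose first and `(j+1)`-st columns agree.
  let B : Matrix (Fin (k + 1)) (Fin (k + 1)) R := of fun r => Fin.cons (A r j) (A r)
  have hB : B.det = 0 := det_zero_of_column_eq (Fin.succ_ne_zero j).symm fun r => by simp [B]
  rw [det_succ_column_zero] at hB
  rw [Pi.zero_apply, ← hB, vecMul, dotProduct]
  refine Finset.sum_congr rfl fun i _ => ?_
  have hsub : B.submatrix i.succAbove Fin.succ = A.submatrix i.succAbove id := rfl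
  simp only [altMinors, hsub, B, of_apply, Fin.cons_zero]
  ring

end CommRing

variable {D : Type*} [DivisionRing D] [CharZero D]

theorem eq_zero_of_vecMul_map_intCast_eq_zero {n : Type*} [Fintype n] [DecidableEq n]
    {M : Matrix n n ℤ} (hM : M.det ≠ 0) {u : n → D} (hu : u ᵥ* M.map Int.cast = 0) :
    u = 0 := by
  have hadj : M.map (Int.cast : ℤ → D) * M.adjugate.map Int.cast =
      diagonal fun _ => (M.det : D) := by
    have := Matrix.map_mul (f := Int.castRingHom D) (L := M) (M := M.adjugate)
    rw [Int.coe_castRingHom] at this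
    rw [← this, mul_adjugate, smul_one_eq_diagonal, diagonal_map Int.cast_zero]
  funext i
  have h := congrFun (vecMul_vecMul u (M.map Int.cast) (M.adjugate.map Int.cast)) i
  rw [hu, zero_vecMul, hadj, vecMul_diagonal] at h
  exact (mul_eq_zero.1 h.symm).resolve_right (Int.cast_ne_zero.2 hM)

theorem exists_eq_altMinors_mul_of_vecMul_eq_zero {A : Matrix (Fin (k + 1)) (Fin k) ℤ}
    (hA : (A.submatrix Fin.succ id).det ≠ 0) {v : Fin (k + 1) → D}
    (hv : v ᵥ* A.map Int.cast = 0) : ∃ w : D, ∀ i, v i = ((altMinors A i : ℤ) : D) * w := by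
  have hc : ((altMinors A 0 : ℤ) : D) ≠ 0 := by rwa [altMinors_zero, Int.cast_ne_zero]
  obtain ⟨w, hw⟩ : ∃ w, ((altMinors A 0 : ℤ) : D) * w = v 0 := ⟨_, mul_inv_cancel_left₀ hc _⟩
  -- `u` vanishes at `0` and lies in the left kernel of `A`, hence of its invertible lower block.
  set u : Fin (k + 1) → D := fun i => v i - ((altMinors A i : ℤ) : D) * w
  have hu : u ᵥ* A.map Int.cast = 0 := by
    funext j
    have h := congrArg (Int.cast : ℤ → D) (congrFun (altMinors_vecMul A) j)
    have h' := congrFun hv j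
    simp only [vecMul, dotProduct, map_apply, Pi.zero_apply, Int.cast_sum, Int.cast_mul,
      Int.cast_zero, u, sub_mul] at h h' ⊢
    rw [Finset.sum_sub_distrib, h', zero_sub, neg_eq_zero]
    calc _ = (∑ i, ((altMinors A i : ℤ) : D) * (A i j : D)) * w := by
          rw [Finset.sum_mul]
          refine Finset.sum_congr rfl fun i _ => ?_
          rw [mul_assoc, mul_assoc, Int.cast_comm (A i j)]
      _ = 0 := by rw [h, zero_mul]
  have hu0 : u 0 = 0 := sub_eq_zero.2 hw.symm
  have hsucc : (fun i : Fin k => u i.succ) = 0 := by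
    refine eq_zero_of_vecMul_map_intCast_eq_zero hA (funext fun j => ?_)
    have := congrFun hu j
    simpa [vecMul, dotProduct, Fin.sum_univ_succ, hu0] using this
  refine ⟨w, fun i => sub_eq_zero.1 ?_⟩
  cases i using Fin.cases with
  | zero => exact hu0
  | succ i => exact congrFun hsucc i

end Matrix

open Matrix

instance : CharZero ℍ := charZero_of_injective_algebraMap (algebraMap ℝ ℍ).injective

lemma norm_intCast_quaternion (n : ℤ) : ‖(n : ℍ)‖ = |(n : ℝ)| := by
  rw [← Quaternion.coe_intCast, Quaternion.norm_coe, Real.norm_eq_abs]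

@[simp] lemma qI_re : qI.re = 0 := rfl
@[simp] lemma qI_imI : qI.imI = 1 := rfl
@[simp] lemma qI_imJ : qI.imJ = 0 := rfl
@[simp] lemma qI_imK : qI.imK = 0 := rfl

lemma norm_qI : ‖qI‖ = 1 := by
  rw [← pow_eq_one_iff_of_nonneg (norm_nonneg _) two_ne_zero, sq,
    ← Quaternion.normSq_eq_norm_mul_self, Quaternion.normSq_def']
  simp

noncomputable def hopf (z : ℍ) : ℍ := star z * qI * z

section hopf

variable (z : ℍ)

lemma hopf_re : (hopf z).re = 0 := by
  simp [hopf, Quaternion.re_mul, Quaternion.imI_mul, Quaternion.imJ_mul, Quaternion.imK_mul]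
  ring

lemma hopf_imI : (hopf z).imI = z.re ^ 2 + z.imI ^ 2 - z.imJ ^ 2 - z.imK ^ 2 := by
  simp [hopf, Quaternion.re_mul, Quaternion.imI_mul, Quaternion.imJ_mul, Quaternion.imK_mul]
  ring

lemma hopf_imJ : (hopf z).imJ = 2 * (z.imI * z.imJ - z.re * z.imK) := by
  simp [hopf, Quaternion.re_mul, Quaternion.imI_mul, Quaternion.imJ_mul, Quaternion.imK_mul]
  ring

lemma hopf_imK : (hopf z).imK = 2 * (z.re * z.imJ + z.imI * z.imK) := by
  simp [hopf, Quaternion.re_mul, Quaternion.imI_mul, Quaternion.imJ_mul, Quaternion.imK_mul]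
  ring

lemma norm_hopf : ‖hopf z‖ = ‖z‖ ^ 2 := by
  rw [hopf, norm_mul, norm_mul, Quaternion.norm_star, norm_qI]
  ring

lemma hopf_mul (s : ℍ) : hopf (z * s) = star s * hopf z * s := by
  simp only [hopf, star_mul, mul_assoc]

end hopf

lemma isUnitComplexQ_of_hopf_eq_qI {t : ℍ} (h : hopf t = qI) : IsUnitComplexQ t := by
  have h1 := congrArg (·.imI) h
  have h2 := congrArg (·.imJ) h
  have h3 := congrArg (·.imK) h
  simp only [hopf_imI, hopf_imJ, hopf_imK, qI_imI, qI_imJ, qI_imK] at h1 h2 h3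
  -- `(a² + b²)(c² + d²) = (ac + bd)² + (ad - bc)²` vanishes, while `a² + b² - c² - d² = 1`.
  have hJK : t.imJ ^ 2 + t.imK ^ 2 = 0 := by
    nlinarith [sq_nonneg t.imJ, sq_nonneg t.imK, sq_nonneg t.re, sq_nonneg t.imI]
  have hnorm : ‖t‖ ^ 2 = 1 := by rw [← norm_hopf, h, norm_qI]
  exact ⟨by nlinarith [sq_nonneg t.imJ, sq_nonneg t.imK],
    by nlinarith [sq_nonneg t.imJ, sq_nonneg t.imK],
    (pow_eq_one_iff_of_nonneg (norm_nonneg t) two_ne_zero).1 hnorm⟩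

lemma exists_hopf_eq_smul_qI (r : ℝ) : ∃ z : ℍ, hopf z = r • qI := by
  rcases le_or_gt 0 r with hr | hr
  · refine ⟨(√r : ℍ), ?_⟩
    ext <;> simp [hopf_re, hopf_imI, hopf_imJ, hopf_imK, Real.sq_sqrt hr]
  · obtain ⟨z, h0, hI, hJ, hK⟩ : ∃ z : ℍ, z.re = 0 ∧ z.imI = 0 ∧ z.imJ = √(-r) ∧ z.imK = 0 :=
      ⟨⟨0, 0, √(-r), 0⟩, rfl, rfl, rfl, rfl⟩
    refine ⟨z, ?_⟩
    ext <;> simp [hopf_re, hopf_imI, hopf_imJ, hopf_imK, h0, hI, hJ, hK,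
      Real.sq_sqrt (neg_nonneg.2 hr.le)]

lemma exists_isUnitComplexQ_mul_of_hopf_eq {x y : ℍ} (h : hopf y = hopf x) :
    ∃ t, IsUnitComplexQ t ∧ y = t * x := by
  rcases eq_or_ne x 0 with rfl | hx
  · have hy : ‖y‖ ^ 2 = 0 := by rw [← norm_hopf, h, hopf, mul_zero, norm_zero]
    exact ⟨1, ⟨Quaternion.imJ_one, Quaternion.imK_one, norm_one⟩, by simpa using hy⟩
  obtain ⟨t, rfl⟩ : ∃ t, y = t * x := ⟨y * x⁻¹, (inv_mul_cancel_right₀ hx y).symm⟩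
  refine ⟨t, isUnitComplexQ_of_hopf_eq_qI ?_, rfl⟩
  have h' : star x * hopf t * x = star x * qI * x := by rw [← hopf_mul, h, hopf]
  exact mul_left_cancel₀ (star_ne_zero.2 hx) (mul_right_cancel₀ hx h')

section NOmega

variable {k : ℕ} {Ω : Matrix (Fin (k + 2)) (Fin k) ℤ} {p : Fin (k + 2)}

lemma mem_NOmega_iff {x : Fin (k + 2) → ℍ} :
    x ∈ NOmega k Ω ↔ (∑ q, ‖x q‖ ^ 2 = 1) ∧ ∀ j, ∑ q, hopf (x q) * (Ω q j : ℍ) = 0 :=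
  Iff.rfl

lemma mem_NOmega_iff_of_apply_eq_zero {x : Fin (k + 2) → ℍ} (hxp : x p = 0) :
    x ∈ NOmega k Ω ↔ (∑ i, ‖x (p.succAbove i)‖ ^ 2 = 1) ∧
      (fun i => hopf (x (p.succAbove i))) ᵥ* (Ω.submatrix p.succAbove id).map Int.cast = 0 := by
  simp only [mem_NOmega_iff, Fin.sum_univ_succAbove _ p, hxp, norm_zero, hopf, star_zero,
    zero_mul, funext_iff, Matrix.vecMul, dotProduct, Matrix.map_apply, Matrix.submatrix_apply,
    id_eq, Pi.zero_apply]
  norm_num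

lemma altMinors_submatrix_succAbove (i : Fin (k + 1)) :
    altMinors (Ω.submatrix p.succAbove id) i = (-1) ^ (i : ℕ) * Delta k Ω p (p.succAbove i) := by
  have hcard : ({p, p.succAbove i} : Finset (Fin (k + 2)))ᶜ.card = k := by
    rw [Finset.card_compl, Finset.card_pair (Fin.succAbove_ne p i).symm]
    simp
  have hmem (l : Fin k) : p.succAbove (i.succAbove l) ∈ ({p, p.succAbove i} : Finset _)ᶜ := by
    simp only [Finset.mem_compl, Finset.mem_insert, Finset.mem_singleton, not_or]
    exact ⟨Fin.succAbove_ne p _, fun h => Fin.succAbove_ne i l (Fin.succAbove_right_injective h)⟩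
  have hmono : StrictMono fun l => p.succAbove (i.succAbove l) :=
    (Fin.strictMono_succAbove p).comp (Fin.strictMono_succAbove i)
  rw [altMinors, Delta, minorDet, dif_pos hcard, ← Finset.orderEmbOfFin_unique hcard hmem hmono]
  rfl

lemma altMinors_submatrix_succAbove_zero_ne_zero (hΔ : Delta k Ω p (p.succAbove 0) ≠ 0) :
    altMinors (Ω.submatrix p.succAbove id) 0 ≠ 0 := by
  rwa [altMinors_submatrix_succAbove, Fin.val_zero, pow_zero, one_mul]

lemma exists_hopf_eq_altMinors_mul (hΔ : Delta k Ω p (p.succAbove 0) ≠ 0)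
    {x : Fin (k + 2) → ℍ} (hx : x ∈ NOmega k Ω) (hxp : x p = 0) :
    ∃ w : ℍ,
      (∀ i, hopf (x (p.succAbove i)) = ((altMinors (Ω.submatrix p.succAbove id) i : ℤ) : ℍ) * w) ∧
      ‖w‖ * ∑ i, |((altMinors (Ω.submatrix p.succAbove id) i : ℤ) : ℝ)| = 1 := by
  rw [mem_NOmega_iff_of_apply_eq_zero hxp] at hx
  have hA := altMinors_submatrix_succAbove_zero_ne_zero hΔ
  rw [altMinors_zero] at hA
  obtain ⟨w, hw⟩ := exists_eq_altMinors_mul_of_vecMul_eq_zero hA hx.2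
  refine ⟨w, hw, ?_⟩
  rw [← hx.1, Finset.mul_sum]
  refine Finset.sum_congr rfl fun i _ => ?_
  rw [← norm_hopf, hw, norm_mul, norm_intCast_quaternion, mul_comm]

lemma exists_mem_NOmega_apply_eq_zero (hΔ : Delta k Ω p (p.succAbove 0) ≠ 0) :
    ∃ x ∈ NOmega k Ω, x p = 0 := by
  have hc0 := altMinors_submatrix_succAbove_zero_ne_zero hΔ
  set c := altMinors (Ω.submatrix p.succAbove id)
  set S := ∑ i, |(c i : ℝ)|
  have hS : S ≠ 0 := by
    refine (Finset.sum_pos' (fun i _ => abs_nonneg _) ⟨0, Finset.mem_univ _, ?_⟩).ne'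
    rwa [abs_pos, Int.cast_ne_zero]
  choose z hz using fun i => exists_hopf_eq_smul_qI (c i / S)
  refine ⟨Fin.insertNth p 0 z, ?_, Fin.insertNth_apply_same _ _ _⟩
  rw [mem_NOmega_iff_of_apply_eq_zero (Fin.insertNth_apply_same _ _ _)]
  simp only [Fin.insertNth_apply_succAbove]
  constructor
  · calc ∑ i, ‖z i‖ ^ 2 = ∑ i, |(c i : ℝ)| / S := by
          refine Finset.sum_congr rfl fun i _ => ?_
          rw [← norm_hopf, hz, norm_smul, norm_qI, mul_one, Real.norm_eq_abs, abs_div,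
            abs_of_nonneg (show 0 ≤ S from Finset.sum_nonneg fun i _ => abs_nonneg _)]
      _ = 1 := by rw [← Finset.sum_div, div_self hS]
  · funext j
    have hcA := congrArg (Int.cast : ℤ → ℝ)
      (congrFun (altMinors_vecMul (Ω.submatrix p.succAbove id)) j)
    simp only [vecMul, dotProduct, Pi.zero_apply, Int.cast_sum, Int.cast_mul, Int.cast_zero] at hcA
    calc ∑ i, hopf (z i) * ((Ω.submatrix p.succAbove id).map Int.cast i j : ℍ)
        = (∑ i, (c i : ℝ) * (Ω.submatrix p.succAbove id i j : ℝ) / S) • qI := by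
          rw [Finset.sum_smul]
          refine Finset.sum_congr rfl fun i _ => ?_
          rw [hz, map_apply, smul_mul_assoc, ← Int.cast_comm, ← zsmul_eq_mul,
            ← Int.cast_smul_eq_zsmul ℝ, smul_smul]
          ring_nf
      _ = 0 := by rw [← Finset.sum_div, hcA, zero_div, zero_smul]

lemma exists_hopf_eq_hopf_mul (hΔ : Delta k Ω p (p.succAbove 0) ≠ 0)
    {x y : Fin (k + 2) → ℍ} (hx : x ∈ NOmega k Ω) (hxp : x p = 0)
    (hy : y ∈ NOmega k Ω) (hyp : y p = 0) :
    ∃ s : ℍ, ‖s‖ = 1 ∧ ∀ q, hopf (y q) = hopf (x q * s) := by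
  obtain ⟨wx, hwx, hSx⟩ := exists_hopf_eq_altMinors_mul hΔ hx hxp
  obtain ⟨wy, hwy, hSy⟩ := exists_hopf_eq_altMinors_mul hΔ hy hyp
  set c := altMinors (Ω.submatrix p.succAbove id)
  have hc0 : (c 0 : ℍ) ≠ 0 := Int.cast_ne_zero.2 (altMinors_submatrix_succAbove_zero_ne_zero hΔ)
  have hw : ‖wx‖ = ‖wy‖ :=
    mul_right_cancel₀ (right_ne_zero_of_mul_eq_one hSx) (hSx.trans hSy.symm)
  have hnorm_sq {z w : ℍ} (h : hopf z = (c 0 : ℍ) * w) : ‖z‖ ^ 2 = ‖(c 0 : ℍ)‖ * ‖w‖ := by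
    rw [← norm_hopf, h, norm_mul]
  have hx0 : x (p.succAbove 0) ≠ 0 := by
    rw [← norm_ne_zero_iff, ← pow_ne_zero_iff two_ne_zero, hnorm_sq (hwx 0)]
    exact mul_ne_zero (norm_ne_zero_iff.2 hc0) (left_ne_zero_of_mul_eq_one hSx)
  have hxy0 : ‖x (p.succAbove 0)‖ = ‖y (p.succAbove 0)‖ := by
    rw [← pow_left_inj₀ (norm_nonneg _) (norm_nonneg _) two_ne_zero, hnorm_sq (hwx 0),
      hnorm_sq (hwy 0), hw]
  obtain ⟨s, hs0⟩ : ∃ s, y (p.succAbove 0) = x (p.succAbove 0) * s :=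
    ⟨_, (mul_inv_cancel_left₀ hx0 _).symm⟩
  have hs : ‖s‖ = 1 := by
    rwa [hs0, norm_mul, left_eq_mul₀ (norm_ne_zero_iff.2 hx0)] at hxy0
  have hcomm (n : ℤ) (w : ℍ) : star s * ((n : ℍ) * w) * s = n * (star s * w * s) := by
    rw [← mul_assoc (star s), ← Int.cast_comm]
    simp only [mul_assoc]
  have hwxy : wy = star s * wx * s := by
    refine mul_left_cancel₀ hc0 ?_
    rw [← hwy 0, ← hcomm, ← hwx 0, ← hopf_mul, hs0]
  refine ⟨s, hs, fun q => ?_⟩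
  rcases Fin.eq_self_or_eq_succAbove p q with rfl | ⟨i, rfl⟩
  · rw [hxp, hyp, zero_mul]
  · rw [hwy, hopf_mul, hwx, hwxy, hcomm]

end NOmega

theorem NpOmega_nonempty_and_transitive_general (k : ℕ)
    (Ω : Matrix (Fin (k + 2)) (Fin k) ℤ) (hΩ : CondStar k Ω) (p : Fin (k + 2)) :
    (∃ x ∈ NOmega k Ω, x p = 0) ∧
    (∀ x ∈ NOmega k Ω, x p = 0 → ∀ y ∈ NOmega k Ω, y p = 0 →
      ∃ t : Fin (k + 2) → ℍ, (∀ q, IsUnitComplexQ (t q)) ∧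
        ∃ s : ℍ, ‖s‖ = 1 ∧ ∀ q, y q = t q * x q * s⁻¹) := by
  have hΔ : Delta k Ω p (p.succAbove 0) ≠ 0 := hΩ.1 p _ (Fin.succAbove_ne p 0).symm
  refine ⟨exists_mem_NOmega_apply_eq_zero hΔ, fun x hx hxp y hy hyp => ?_⟩
  obtain ⟨s, hs, hxy⟩ := exists_hopf_eq_hopf_mul hΔ hx hxp hy hyp
  choose t ht hyt using fun q => exists_isUnitComplexQ_mul_of_hopf_eq (hxy q)
  exact ⟨t, ht, s⁻¹, by rw [norm_inv, hs, inv_one], fun q => by rw [inv_inv, hyt, mul_assoc]⟩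

/-- `N^p_Ω` is nonempty and `T^{k+2} × S^3` acts transitively on it. -/
theorem NpOmega_nonempty_and_transitive (k : ℕ) (hk : 2 ≤ k)
    (Ω : Matrix (Fin (k + 2)) (Fin k) ℤ) (hΩ : CondStar k Ω) (p : Fin (k + 2)) :
    (∃ x ∈ NOmega k Ω, x p = 0) ∧
    (∀ x ∈ NOmega k Ω, x p = 0 → ∀ y ∈ NOmega k Ω, y p = 0 →
      ∃ t : Fin (k + 2) → ℍ, (∀ q, IsUnitComplexQ (t q)) ∧
        ∃ s : ℍ, ‖s‖ = 1 ∧ ∀ q, y q = t q * x q * s⁻¹) :=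
  NpOmega_nonempty_and_transitive_general k Ω hΩ p
end
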